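/- For all positive integers n and x, the following identity holds: (xn + n − 1) · #{ (r_1,…,r_n) ∈ ℕ^n : r_1 + ⋯ + r_k ≤ kx − 1 for every 1 ≤ k ≤ n−1, and r_1 + ⋯ + r_n = nx − 1 } = binom(xn + n − 1, n). -/

import Mathlib

/-!
Raney's cycle lemma. For `s : Fin n → ℕ` with sum `n x - 1`, the height
`G m = s 0 + ⋯ + s (m - 1) - m x` of the periodic extension of `s` drops by exactly `1` over
each period, so exactly one of the `n` cyclic rotations of `s` satisfies the ballot condition:
the one starting at the last maximum of `G` on `[0, n)`. Hence `n` times the number of ballot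
tuples is the number `(n + n x - 2).choose (n x - 1)` of all such `s`, and the identity follows
from `N * (N - 1).choose (n - 1) = n * N.choose n`.
-/

open Finset

def ExceedsNext (G : ℕ → ℤ) (n d : ℕ) : Prop :=
  ∀ k, 1 ≤ k → k ≤ n - 1 → G (d + k) < G d

section CycleLemma

variable {n : ℕ} {G : ℕ → ℤ}

theorem exists_exceedsNext (hn : 0 < n) (hG : ∀ m, G (m + n) = G m - 1) :
    ∃ d : Fin n, ExceedsNext G n d := by
  have : Nonempty (Fin n) := ⟨⟨0, hn⟩⟩
  -- the last position at which `G` attains its maximum on `[0, n)`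
  obtain ⟨d, -, hd⟩ := exists_max_image univ (fun i : Fin n => toLex (G i, i)) univ_nonempty
  refine ⟨d, fun k hk1 hk2 => ?_⟩
  rcases lt_or_ge (d + k) n with hlt | hge
  · have := hd ⟨d + k, hlt⟩ (mem_univ _)
    simp only [Prod.Lex.toLex_le_toLex, Fin.le_def] at this
    omega
  · have := hd ⟨d + k - n, by omega⟩ (mem_univ _)
    simp only [Prod.Lex.toLex_le_toLex, Fin.le_def] at this
    rw [show (d : ℕ) + k = d + k - n + n by omega, hG]
    omega

theorem eq_of_exceedsNext (hG : ∀ m, G (m + n) = G m - 1) {a b : ℕ} (ha : a < n) (hb : b < n)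
    (hGa : ExceedsNext G n a) (hGb : ExceedsNext G n b) : a = b := by
  wlog hab : a < b generalizing a b
  · rcases (not_lt.1 hab).lt_or_eq with hba | hba
    · exact (this hb ha hGb hGa hba).symm
    · exact hba.symm
  have hba := hGa (b - a) (by omega) (by omega)
  have hab := hGb (a + n - b) (by omega) (by omega)
  rw [show a + (b - a) = b by omega] at hba
  rw [show b + (a + n - b) = a + n by omega, hG] at hab
  omega

theorem cycle_lemma (hn : 0 < n) (hG : ∀ m, G (m + n) = G m - 1) :
    ∃! d : Fin n, ExceedsNext G n d := by
  obtain ⟨d, hd⟩ := exists_exceedsNext hn hG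
  exact ⟨d, hd, fun e he => Fin.ext (eq_of_exceedsNext hG e.isLt d.isLt he hd)⟩

end CycleLemma

section PartialSums

open Fin.NatCast

variable {n : ℕ}

theorem sum_filter_val_lt_eq_sum_range {M : Type*} [AddCommMonoid M] (f : ℕ → M) {k : ℕ}
    (hk : k ≤ n) : ∑ j ∈ univ.filter (fun j : Fin n => (j : ℕ) < k), f j = ∑ i ∈ range k, f i := by
  rw [sum_filter, Fin.sum_univ_eq_sum_range (fun i => if i < k then f i else 0), ← sum_filter]
  congr 1
  ext i
  simp only [mem_filter, mem_range]
  omega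

variable [NeZero n]

-- `(i : Fin n)` is `i mod n`, so these are the partial sums of the periodic extension of `s`.
def periodicPartialSum (s : Fin n → ℕ) (m : ℕ) : ℕ := ∑ i ∈ range m, s i

theorem sum_range_natCast_add (s : Fin n → ℕ) (d : ℕ) :
    ∑ i ∈ range n, s ((d + i : ℕ) : Fin n) = ∑ j, s j := by
  rw [← Fin.sum_univ_eq_sum_range (fun i => s ((d + i : ℕ) : Fin n))]
  simp only [Nat.cast_add, Fin.cast_val_eq_self]
  exact Equiv.sum_comp (Equiv.addLeft (d : Fin n)) s

theorem periodicPartialSum_add_period (s : Fin n → ℕ) (m : ℕ) :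
    periodicPartialSum s (m + n) = periodicPartialSum s m + ∑ j, s j := by
  rw [periodicPartialSum, sum_range_add, sum_range_natCast_add, periodicPartialSum]

theorem periodicPartialSum_add_sum_rotate (s : Fin n → ℕ) (d : Fin n) {k : ℕ} (hk : k ≤ n) :
    periodicPartialSum s d + ∑ j ∈ univ.filter (fun j : Fin n => (j : ℕ) < k), s (j + d) =
      periodicPartialSum s (d + k) := by
  have hrot : ∀ j : Fin n, s (j + d) = s ((d + j : ℕ) : Fin n) := fun j => by
    rw [Nat.cast_add, Fin.cast_val_eq_self, Fin.cast_val_eq_self, add_comm]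
  simp only [hrot]
  rw [sum_filter_val_lt_eq_sum_range (fun i => s ((d + i : ℕ) : Fin n)) hk, periodicPartialSum,
    periodicPartialSum, sum_range_add]

end PartialSums

def IsBallot {n : ℕ} (x : ℕ) (r : Fin n → ℕ) : Prop :=
  ∀ k, 1 ≤ k → k ≤ n - 1 → ∑ j ∈ univ.filter (fun j : Fin n => (j : ℕ) < k), r j ≤ k * x - 1

section Ballot

variable {n : ℕ} [NeZero n] {x : ℕ}

def ballotHeight (x : ℕ) (s : Fin n → ℕ) (m : ℕ) : ℤ := periodicPartialSum s m - m * x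

theorem isBallot_rotate_iff (hx : 0 < x) (s : Fin n → ℕ) (d : Fin n) :
    IsBallot x (fun j => s (j + d)) ↔ ExceedsNext (ballotHeight x s) n d := by
  unfold IsBallot ExceedsNext
  refine forall₃_congr fun k hk1 hk2 => ?_
  have hsum := periodicPartialSum_add_sum_rotate s d (k := k) (by omega)
  have hkx : 1 ≤ k * x := Nat.one_le_iff_ne_zero.2 (by positivity)
  simp only [ballotHeight]
  zify [hkx] at hsum ⊢
  constructor <;> intro h <;> linarith

theorem ballotHeight_add_period {s : Fin n → ℕ} (hs : ∑ j, s j = n * x - 1) (hnx : 0 < n * x)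
    (m : ℕ) : ballotHeight x s (m + n) = ballotHeight x s m - 1 := by
  simp only [ballotHeight, periodicPartialSum_add_period, hs]
  push_cast [Nat.one_le_iff_ne_zero.2 hnx.ne']
  ring

theorem existsUnique_isBallot_rotate (hx : 0 < x) {s : Fin n → ℕ} (hs : ∑ j, s j = n * x - 1) :
    ∃! d : Fin n, IsBallot x (fun j => s (j + d)) := by
  simp only [isBallot_rotate_iff hx]
  exact cycle_lemma (Nat.pos_of_neZero n)
    (ballotHeight_add_period hs (Nat.mul_pos (Nat.pos_of_neZero n) hx))

end Ballot

theorem card_ballot_mul_eq (n : ℕ) [NeZero n] {x : ℕ} (hx : 0 < x) :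
    Nat.card {r : Fin n → ℕ // IsBallot x r ∧ ∑ j, r j = n * x - 1} * n =
      Nat.card {s : Fin n → ℕ // ∑ j, s j = n * x - 1} := by
  let unrotate (p : {r : Fin n → ℕ // IsBallot x r ∧ ∑ j, r j = n * x - 1} × Fin n) :
      {s : Fin n → ℕ // ∑ j, s j = n * x - 1} :=
    ⟨fun j => p.1.1 (j - p.2), (Equiv.sum_comp (Equiv.subRight p.2) _).trans p.1.2.2⟩
  have hunrotate : Function.Bijective unrotate := by
    refine ⟨?_, fun s => ?_⟩
    · rintro ⟨⟨r, hr, hrs⟩, d⟩ ⟨⟨r', hr', -⟩, d'⟩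
      intro h
      have hs (j : Fin n) : r (j - d) = r' (j - d') := congrFun (congrArg Subtype.val h) j
      have hd : IsBallot x (fun j => r (j + d - d)) := by simpa using hr
      have hd' : IsBallot x (fun j => r (j + d' - d)) := by simpa [hs] using hr'
      obtain rfl := (existsUnique_isBallot_rotate hx (unrotate ⟨⟨r, hr, hrs⟩, d⟩).2).unique hd hd'
      obtain rfl : r = r' := funext fun j => by simpa using hs (j + d)
      rfl
    · obtain ⟨d, hd, -⟩ := existsUnique_isBallot_rotate hx s.2
      refine ⟨⟨⟨_, hd, (Equiv.sum_comp (Equiv.addRight d) _).trans s.2⟩, d⟩, ?_⟩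
      ext j
      simp [unrotate]
  rw [← Nat.card_eq_of_bijective unrotate hunrotate, Nat.card_prod, Nat.card_fin]

theorem natCard_sum_eq_choose (α : Type*) [Fintype α] (m : ℕ) :
    Nat.card {s : α → ℕ // ∑ a, s a = m} = (Fintype.card α + m - 1).choose m := by
  classical
  rw [← Nat.card_congr (Sym.equivNatSumOfFintype α m), Nat.card_eq_fintype_card,
    Sym.card_sym_eq_choose]

theorem add_mul_eq_choose_of_mul_eq {n m V : ℕ} (hn : 0 < n)
    (h : n * V = (n + m - 1).choose m) : (n + m) * V = (n + m).choose n := by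
  obtain ⟨a, rfl⟩ : ∃ a, n = a + 1 := ⟨n - 1, by omega⟩
  refine Nat.eq_of_mul_eq_mul_left hn ?_
  calc (a + 1) * ((a + 1 + m) * V) = (a + m + 1) * ((a + 1) * V) := by ring
    _ = (a + m + 1) * (a + m).choose a := by
      rw [h, show a + 1 + m - 1 = a + m by omega, Nat.choose_symm_add]
    _ = (a + 1) * (a + 1 + m).choose (a + 1) := by
      rw [Nat.add_one_mul_choose_eq, Nat.add_right_comm, mul_comm]

theorem stmt19 (n x : ℕ) (hn : 0 < n) (hx : 0 < x) :
    (x * n + n - 1) * Nat.card {r : Fin n → ℕ //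
      (∀ k : ℕ, 1 ≤ k → k ≤ n - 1 →
        ∑ j ∈ Finset.univ.filter (fun j : Fin n => (j : ℕ) < k), r j ≤ k * x - 1) ∧
      (∑ j, r j = n * x - 1)} =
    Nat.choose (x * n + n - 1) n := by
  have : NeZero n := ⟨hn.ne'⟩
  have hcount := card_ballot_mul_eq n hx
  rw [natCard_sum_eq_choose, Fintype.card_fin, mul_comm] at hcount
  have hnx : 0 < n * x := Nat.mul_pos hn hx
  rw [mul_comm x n, show n * x + n - 1 = n + (n * x - 1) by omega]
  exact add_mul_eq_choose_of_mul_eq hn hcount
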